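/- arXiv:2303.07211 — 5 statements merged into one kernel-verified Lean document; each statement's English description precedes it below -/
import Mathlib

section
/- For positive integers c ≤ a ≤ b, one has C(a,c)/C(b,c) ≤ ((a - (c-1)/2)/(b - (c-1)/2))^c. -/
/-!
Write `m = (c - 1) / 2`. Pairing the factor `x - i` of the descending Pochhammer product
`x (x - 1) ⋯ (x - c + 1)` with its mirror `x - (c - 1 - i)` gives `(x - m)² - (m - i)²`, so its
square is `∏ ((x - m)² - dᵢ²)` with `dᵢ` independent of `x`. Since
`(A² - d²) / (B² - d²) ≤ A² / B²` for `d² ≤ A² ≤ B²`, comparing these products at `x = a` and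
`x = b` bounds the square of `C(a, c) / C(b, c)` by `((a - m) / (b - m))^(2c)`.
-/

open Finset Polynomial

theorem prod_sq_sub_sq_mul_pow_le {ι : Type*} (s : Finset ι) (d : ι → ℝ) {A B : ℝ}
    (hd : ∀ i ∈ s, d i ^ 2 ≤ A ^ 2) (hAB : A ^ 2 ≤ B ^ 2) :
    (∏ i ∈ s, (A ^ 2 - d i ^ 2)) * (B ^ 2) ^ #s ≤ (∏ i ∈ s, (B ^ 2 - d i ^ 2)) * (A ^ 2) ^ #s := by
  rw [← prod_const, ← prod_const, ← prod_mul_distrib, ← prod_mul_distrib]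
  refine prod_le_prod (fun i hi => mul_nonneg (sub_nonneg.2 (hd i hi)) (sq_nonneg B))
    fun i _ => ?_
  nlinarith [mul_nonneg (sq_nonneg (d i)) (sub_nonneg.2 hAB)]

theorem descPochhammer_eval_sq (c : ℕ) (x : ℝ) :
    (descPochhammer ℝ c).eval x ^ 2 =
      ∏ i ∈ range c, ((x - ((c : ℝ) - 1) / 2) ^ 2 - (((c : ℝ) - 1) / 2 - i) ^ 2) := by
  rw [sq, descPochhammer_eval_eq_prod_range]
  nth_rw 2 [← prod_range_reflect]
  rw [← prod_mul_distrib]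
  refine prod_congr rfl fun i hi => ?_
  have hic : i + 1 ≤ c := mem_range.1 hi
  rw [Nat.sub_sub, Nat.cast_sub (by omega), Nat.cast_add, Nat.cast_one]
  ring

theorem descPochhammer_eval_mul_pow_le {c : ℕ} {x y : ℝ} (hx : (c : ℝ) - 1 ≤ x) (hxy : x ≤ y) :
    (descPochhammer ℝ c).eval x * (y - ((c : ℝ) - 1) / 2) ^ c ≤
      (descPochhammer ℝ c).eval y * (x - ((c : ℝ) - 1) / 2) ^ c := by
  rcases Nat.eq_zero_or_pos c with rfl | hc
  · simp
  set m : ℝ := ((c : ℝ) - 1) / 2 with hm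
  have hxm : m ≤ x := by
    have : (1 : ℝ) ≤ c := by exact_mod_cast hc
    linarith
  have hd : ∀ i ∈ range c, (m - i) ^ 2 ≤ (x - m) ^ 2 := by
    intro i hi
    have hic : (i : ℝ) + 1 ≤ c := by exact_mod_cast mem_range.1 hi
    nlinarith [mul_nonneg (by linarith : 0 ≤ x - i) (by linarith : 0 ≤ x - (c - 1 - i))]
  have hAB : (x - m) ^ 2 ≤ (y - m) ^ 2 := pow_le_pow_left₀ (sub_nonneg.2 hxm) (by linarith) 2
  have hsq : ((descPochhammer ℝ c).eval x * (y - m) ^ c) ^ 2 ≤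
      ((descPochhammer ℝ c).eval y * (x - m) ^ c) ^ 2 := by
    rw [mul_pow, mul_pow, descPochhammer_eval_sq, descPochhammer_eval_sq, ← hm, ← pow_mul,
      ← pow_mul, mul_comm c 2, pow_mul, pow_mul]
    simpa only [card_range] using prod_sq_sub_sq_mul_pow_le (range c) (fun i => m - i) hd hAB
  have hrhs : 0 ≤ (descPochhammer ℝ c).eval y * (x - m) ^ c :=
    mul_nonneg (descPochhammer_nonneg (by linarith)) (pow_nonneg (sub_nonneg.2 hxm) c)
  exact (abs_le_of_sq_le_sq' hsq hrhs).2

theorem binom_ratio_bound_general (a b c : ℕ) (hca : c ≤ a) (hab : a ≤ b) :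
    (a.choose c : ℝ) / (b.choose c : ℝ) ≤
      (((a : ℝ) - ((c : ℝ) - 1) / 2) / ((b : ℝ) - ((c : ℝ) - 1) / 2)) ^ c := by
  have hcaR : (c : ℝ) ≤ a := by exact_mod_cast hca
  have habR : (a : ℝ) ≤ b := by exact_mod_cast hab
  rw [Nat.cast_choose_eq_descPochhammer_div, Nat.cast_choose_eq_descPochhammer_div,
    div_div_div_cancel_right₀ (Nat.cast_ne_zero.2 c.factorial_ne_zero), div_pow,
    div_le_div_iff₀ (descPochhammer_pos (s := (b : ℝ)) (by linarith)) (pow_pos (by linarith) c)]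
  exact (descPochhammer_eval_mul_pow_le (by linarith : (c : ℝ) - 1 ≤ a) habR).trans_eq
    (mul_comm _ _)

theorem binom_ratio_bound (a b c : ℕ) (hc : 0 < c) (hca : c ≤ a) (hab : a ≤ b) :
    (a.choose c : ℝ) / (b.choose c : ℝ) ≤
      (((a : ℝ) - ((c : ℝ) - 1) / 2) / ((b : ℝ) - ((c : ℝ) - 1) / 2)) ^ c :=
  binom_ratio_bound_general a b c hca hab
end

section
/- If C is a q-ary (k,n)-frameproof code of length t, then the 2t × n matrix obtained by stacking C on top of its complement C̄ (where each entry s is replaced by q-1-s) is a q-ary (k+1,n)-strongly selective code. Consequently t_SS(q,k+1,n) ≤ 2·t_FP(q,k,n). -/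
/-- Frameproof property for a matrix with rows indexed by an arbitrary type `ι`. -/
def IsFrameproof (q k n : ℕ) {ι : Type*} (M : ι → Fin n → ℕ) : Prop :=
  (∀ i j, M i j < q) ∧
  ∀ c : Fin n, ∀ S : Finset (Fin n), S.card = k → c ∉ S →
    ∃ i : ι, ∀ j ∈ S, M i j ≠ M i c

/-- Strongly selective property for a matrix with rows indexed by `ι`. -/
def IsStronglySelective (q k n : ℕ) {ι : Type*} (M : ι → Fin n → ℕ) : Prop :=
  (∀ i j, M i j < q) ∧
  ∀ S : Finset (Fin n), S.card = k → ∀ c ∈ S,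
    ∃ i : ι, M i c ≠ 0 ∧ ∀ j ∈ S, j ≠ c → M i j ≠ M i c

/-!
A frameproof row `i` for the column `c` against `S \ {c}` already separates `c` from the rest of
`S`. If `M i c ≠ 0` that row is a strongly selective witness; if `M i c = 0`, the complemented row
has the nonzero entry `q - 1` at `c`, and complementing `s ↦ q - 1 - s` is injective on
`{0, …, q - 1}`, so it still separates `c`. Reindexing `Fin t ⊕ Fin t` as `Fin (2 * t)` turns
this into the bound on minimal lengths.
-/

theorem IsFrameproof.isStronglySelective_sumElim_complement {q k n : ℕ} (hq : 2 ≤ q)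
    {ι : Type*} {M : ι → Fin n → ℕ} (hM : IsFrameproof q k n M) :
    IsStronglySelective q (k + 1) n (Sum.elim M fun i j => q - 1 - M i j) := by
  obtain ⟨hlt, hfp⟩ := hM
  refine ⟨?_, fun S hS c hc => ?_⟩
  · rintro (i | i) j
    · exact hlt i j
    · simp only [Sum.elim_inr]
      omega
  obtain ⟨i, hi⟩ := hfp c (S.erase c) (by rw [Finset.card_erase_of_mem hc, hS]; rfl)
    (Finset.notMem_erase c S)
  have hsep : ∀ j ∈ S, j ≠ c → M i j ≠ M i c := fun j hj hjc =>
    hi j (Finset.mem_erase.mpr ⟨hjc, hj⟩)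
  by_cases h0 : M i c = 0
  · refine ⟨Sum.inr i, by simp only [Sum.elim_inr]; omega, fun j hj hjc => ?_⟩
    have := hsep j hj hjc
    have := hlt i j
    simp only [Sum.elim_inr]
    omega
  · exact ⟨Sum.inl i, h0, hsep⟩

theorem IsStronglySelective.comp_equiv {q k n : ℕ} {ι ι' : Type*} {M : ι → Fin n → ℕ}
    (hM : IsStronglySelective q k n M) (e : ι' ≃ ι) : IsStronglySelective q k n (M ∘ e) := by
  obtain ⟨hlt, hss⟩ := hM
  refine ⟨fun i j => hlt (e i) j, fun S hS c hc => ?_⟩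
  obtain ⟨i, hic, hsep⟩ := hss S hS c hc
  exact ⟨e.symm i, by simpa using hic, by simpa using hsep⟩

theorem IsFrameproof.exists_isStronglySelective_fin_two_mul {q k n t : ℕ} (hq : 2 ≤ q)
    {M : Fin t → Fin n → ℕ} (hM : IsFrameproof q k n M) :
    ∃ M' : Fin (2 * t) → Fin n → ℕ, IsStronglySelective q (k + 1) n M' :=
  ⟨_, (hM.isStronglySelective_sumElim_complement hq).comp_equiv
    ((finCongr (two_mul t)).trans finSumFinEquiv.symm)⟩

theorem fp_stack_complement_ss_general (q k n t : ℕ) (hq : 2 ≤ q)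
    (M : Fin t → Fin n → ℕ) (hM : IsFrameproof q k n M) :
    IsStronglySelective q (k + 1) n
      (Sum.elim M (fun i j => q - 1 - M i j) : Fin t ⊕ Fin t → Fin n → ℕ) ∧
    ({t' | ∃ M' : Fin t' → Fin n → ℕ, IsStronglySelective q (k + 1) n M'}.Nonempty ∧
      sInf {t' | ∃ M' : Fin t' → Fin n → ℕ, IsStronglySelective q (k + 1) n M'} ≤
        2 * sInf {t' | ∃ M' : Fin t' → Fin n → ℕ, IsFrameproof q k n M'}) := by
  have hlengths : {t' | ∃ M' : Fin t' → Fin n → ℕ, IsFrameproof q k n M'}.Nonempty := ⟨t, M, hM⟩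
  obtain ⟨N, hN⟩ := Nat.sInf_mem hlengths
  have hss := hN.exists_isStronglySelective_fin_two_mul hq
  exact ⟨hM.isStronglySelective_sumElim_complement hq, ⟨_, hss⟩, Nat.sInf_le hss⟩

theorem fp_stack_complement_ss (q k n t : ℕ) (hq : 2 ≤ q) (hk : 0 < k) (hn : k < n)
    (M : Fin t → Fin n → ℕ) (hM : IsFrameproof q k n M) :
    IsStronglySelective q (k + 1) n
      (Sum.elim M (fun i j => q - 1 - M i j) : Fin t ⊕ Fin t → Fin n → ℕ) ∧
    ({t' | ∃ M' : Fin t' → Fin n → ℕ, IsStronglySelective q (k + 1) n M'}.Nonempty ∧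
      sInf {t' | ∃ M' : Fin t' → Fin n → ℕ, IsStronglySelective q (k + 1) n M'} ≤
        2 * sInf {t' | ∃ M' : Fin t' → Fin n → ℕ, IsFrameproof q k n M'}) :=
  fp_stack_complement_ss_general q k n t hq M hM
end

section
/- Let M be a q-ary t×n matrix in which every column has exactly w nonzero entries and any two distinct columns agree on a common nonzero symbol in at most λ = ⌊(w-1)/(k-1)⌋ rows. Then M is a q-ary (k,w,n)-strongly selective code: for any column c and any k-1 other columns, there is a row where c has a nonzero entry s and none of the k-1 other columns has entry s in that row. -/
open Finset

theorem exists_mem_forall_notMem_of_card_mul_lt {ι α : Type*} [DecidableEq α]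
    {s : Finset α} {S : Finset ι} {A : ι → Finset α} {m : ℕ}
    (hA : ∀ d ∈ S, #(A d) ≤ m) (hlt : #S * m < #s) :
    ∃ x ∈ s, ∀ d ∈ S, x ∉ A d := by
  have hcover : #(S.biUnion A) < #s := (card_biUnion_le_card_mul S A m hA).trans_lt hlt
  obtain ⟨x, hxs, hxA⟩ := exists_mem_notMem_of_card_lt_card hcover
  exact ⟨x, hxs, fun d hd hxd => hxA (mem_biUnion.2 ⟨d, hd, hxd⟩)⟩

theorem lambda_matrix_is_strongly_selective_general (k n t w : ℕ)
    (hw : 1 ≤ w)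
    (M : Fin t → Fin n → ℕ)
    (hweight : ∀ c : Fin n,
      (Finset.univ.filter (fun i : Fin t => M i c ≠ 0)).card = w)
    (hpair : ∀ c d : Fin n, c ≠ d →
      (Finset.univ.filter (fun i : Fin t => M i c ≠ 0 ∧ M i c = M i d)).card ≤
        (w - 1) / (k - 1)) :
    ∀ c : Fin n, ∀ S : Finset (Fin n), S.card = k - 1 → c ∉ S →
      ∃ i : Fin t, M i c ≠ 0 ∧ ∀ j ∈ S, M i j ≠ M i c := by
  intro c S hS hcS
  have hlt : (k - 1) * ((w - 1) / (k - 1)) < w := (Nat.mul_div_le _ _).trans_lt (by omega)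
  obtain ⟨i, hi, hfree⟩ := exists_mem_forall_notMem_of_card_mul_lt
    (s := univ.filter (fun i => M i c ≠ 0))
    (A := fun d => univ.filter (fun i => M i c ≠ 0 ∧ M i c = M i d))
    (fun d hd => hpair c d (ne_of_mem_of_not_mem hd hcS).symm) (by rwa [hS, hweight c])
  have hic : M i c ≠ 0 := (mem_filter.1 hi).2
  exact ⟨i, hic, fun j hj hji => hfree j hj (mem_filter.2 ⟨mem_univ i, hic, hji.symm⟩)⟩

theorem lambda_matrix_is_strongly_selective (q k n t w : ℕ)
    (hq : 2 ≤ q) (hk : 2 ≤ k) (hw : 1 ≤ w)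
    (M : Fin t → Fin n → ℕ)
    (hrange : ∀ i j, M i j < q)
    (hweight : ∀ c : Fin n,
      (Finset.univ.filter (fun i : Fin t => M i c ≠ 0)).card = w)
    (hpair : ∀ c d : Fin n, c ≠ d →
      (Finset.univ.filter (fun i : Fin t => M i c ≠ 0 ∧ M i c = M i d)).card ≤
        (w - 1) / (k - 1)) :
    ∀ c : Fin n, ∀ S : Finset (Fin n), S.card = k - 1 → c ∉ S →
      ∃ i : Fin t, M i c ≠ 0 ∧ ∀ j ∈ S, M i j ≠ M i c :=
  lambda_matrix_is_strongly_selective_general k n t w hw M hweight hpair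
end

section
/- For every integer k ≥ 2, the inequality ((k+1)/k)^k · (k+1)/k! < (k!/(k!-1))^k holds. -/
/-! For `k ≥ 4` the two sides are separated by `1`: the left side is below `1` because
`((k + 1) / k) ^ k ≤ e < 3` and `3 (k + 1) ≤ k!`, while the right side is a power of a number
greater than `1`. The cases `k = 2, 3` are numerical. -/

open Nat

lemma succ_div_self_pow_lt_three (n : ℕ) : (((n : ℝ) + 1) / n) ^ n < 3 := by
  rcases eq_or_ne n 0 with rfl | hn
  · norm_num
  have hsucc : ((n : ℝ) + 1) / n = 1 + (n : ℝ)⁻¹ := by field_simp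
  rw [hsucc]
  exact Real.one_add_inv_pow_le_exp.trans_lt Real.exp_one_lt_three

lemma three_mul_succ_le_factorial {n : ℕ} (hn : 4 ≤ n) : 3 * (n + 1) ≤ n ! := by
  induction n, hn using Nat.le_induction with
  | base => decide
  | succ n hn ih =>
    rw [factorial_succ]
    nlinarith

lemma one_lt_div_sub_one {α : Type*} [Field α] [LinearOrder α] [IsStrictOrderedRing α] {x : α}
    (hx : 1 < x) : 1 < x / (x - 1) := by
  rw [one_lt_div (sub_pos.mpr hx)]
  linarith

theorem expurgation_beats_stinson (k : ℕ) (hk : 2 ≤ k) :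
    (((k : ℝ) + 1) / k) ^ k * ((k : ℝ) + 1) / (Nat.factorial k) <
      ((Nat.factorial k : ℝ) / ((Nat.factorial k : ℝ) - 1)) ^ k := by
  obtain rfl | rfl | hk4 : k = 2 ∨ k = 3 ∨ 4 ≤ k := by omega
  · norm_num [factorial]
  · norm_num [factorial]
  have hfac : 3 * ((k : ℝ) + 1) ≤ k ! := by exact_mod_cast three_mul_succ_le_factorial hk4
  have hfac_pos : (0 : ℝ) < k ! := by positivity
  calc (((k : ℝ) + 1) / k) ^ k * ((k : ℝ) + 1) / k !
      < 3 * ((k : ℝ) + 1) / k ! := by gcongr; exact succ_div_self_pow_lt_three k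
    _ ≤ 1 := (div_le_one hfac_pos).mpr hfac
    _ < ((k ! : ℝ) / ((k ! : ℝ) - 1)) ^ k :=
      one_lt_pow₀ (one_lt_div_sub_one (by linarith)) (by omega)
end

section
/- For every integer k ≥ 2, the inequality ((k+1)/k)^k · (k+1)/k! < 2^{k+1} holds. -/
open Nat

theorem add_one_div_le_two {x : ℝ} (hx : 1 ≤ x) : (x + 1) / x ≤ 2 := by
  rw [div_le_iff₀ (by linarith)]
  linarith

theorem add_one_lt_two_mul_factorial {k : ℕ} (hk : 2 ≤ k) : k + 1 < 2 * k ! := by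
  have := self_le_factorial k
  omega

theorem add_one_div_factorial_lt_two {k : ℕ} (hk : 2 ≤ k) : ((k : ℝ) + 1) / k ! < 2 := by
  rw [div_lt_iff₀ (by positivity)]
  exact_mod_cast add_one_lt_two_mul_factorial hk

theorem expurgation_beats_shangguan (k : ℕ) (hk : 2 ≤ k) :
    (((k : ℝ) + 1) / k) ^ k * ((k : ℝ) + 1) / (Nat.factorial k) < 2 ^ (k + 1) := by
  have hk₁ : (1 : ℝ) ≤ k := by exact_mod_cast one_le_two.trans hk
  calc (((k : ℝ) + 1) / k) ^ k * ((k : ℝ) + 1) / k !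
      = (((k : ℝ) + 1) / k) ^ k * (((k : ℝ) + 1) / k !) := mul_div_assoc _ _ _
    _ < 2 ^ k * 2 :=
        mul_lt_mul' (pow_le_pow_left₀ (by positivity) (add_one_div_le_two hk₁) k)
          (add_one_div_factorial_lt_two hk) (by positivity) (by positivity)
    _ = 2 ^ (k + 1) := (pow_succ _ _).symm
end
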